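/- arXiv:1302.0158 — 3 statements merged into one kernel-verified Lean document; each statement's English description precedes it below -/
import Mathlib

section
/- Let X_1, X_2, ... be i.i.d. real random variables with P(X_i = 0) = 0, and set V_m^2 = \sum_{i=1}^m X_i^2. Then for all integers j < k, E[(X_{j+1}^2 / V_{j+1}^2) \cdot (X_{k+1}^2 / V_{k+1}^2)] = 1 / ((j+1)(k+1)). -/
/-!
An i.i.d. sequence is exchangeable: reindexing it by a permutation does not change its law.
For `i ≤ m ≤ n` the swap of `i` and `m` fixes `V_m^2`, `V_n^2` and `X_n`, so the expectations
`E[X_i^2/V_m^2 · X_n^2/V_n^2]`, `i = 1, …, m`, all agree; as `∑_{i ≤ m} X_i^2/V_m^2 = 1` a.s.,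
`m E[X_m^2/V_m^2 · X_n^2/V_n^2] = E[X_n^2/V_n^2]`. The same argument without the second factor
gives `n E[X_n^2/V_n^2] = 1`.
-/

open MeasureTheory ProbabilityTheory Filter

noncomputable section

/-- Partial sums `S_m = X_1 + ... + X_m`. -/
def S {Ω : Type*} (X : ℕ → Ω → ℝ) (m : ℕ) (ω : Ω) : ℝ := ∑ i ∈ Finset.Icc 1 m, X i ω

/-- `V_m^2 = X_1^2 + ... + X_m^2`. -/
def V2 {Ω : Type*} (X : ℕ → Ω → ℝ) (m : ℕ) (ω : Ω) : ℝ := ∑ i ∈ Finset.Icc 1 m, (X i ω)^2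

/-- `V_m = (X_1^2 + ... + X_m^2)^{1/2}`. -/
def V {Ω : Type*} (X : ℕ → Ω → ℝ) (m : ℕ) (ω : Ω) : ℝ := Real.sqrt (V2 X m ω)

/-- Self-normalized sums `Y_m = S_m / V_m`. -/
def Ysn {Ω : Type*} (X : ℕ → Ω → ℝ) (m : ℕ) (ω : Ω) : ℝ := S X m ω / V X m ω

/-- The `X i`, `i ≥ 1`, are i.i.d. -/
def IID {Ω : Type*} [MeasurableSpace Ω] (μ : Measure Ω) (X : ℕ → Ω → ℝ) : Prop :=
  iIndepFun X μ ∧ ∀ i, IdentDistrib (X i) (X 1) μ μ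

/-- Each `X i` is symmetric (about 0) in distribution. -/
def SymmLaw {Ω : Type*} [MeasurableSpace Ω] (μ : Measure Ω) (X : ℕ → Ω → ℝ) : Prop :=
  ∀ i, Measure.map (X i) μ = Measure.map (fun ω => -X i ω) μ

/-- Convergence in distribution of real random variables, tested against bounded
continuous functions. -/
def TendstoInDistr {Ω : Type*} [MeasurableSpace Ω] (μ : Measure Ω) (Z : ℕ → Ω → ℝ)
    (ν : Measure ℝ) : Prop :=
  ∀ f : BoundedContinuousFunction ℝ ℝ,
    Tendsto (fun n => ∫ ω, f (Z n ω) ∂μ) atTop (nhds (∫ x, f x ∂ν))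

/-- `X` is in the domain of attraction of `N(0,1)`: for some norming constants `a_n > 0`
the normalized partial sums converge in distribution to the standard normal law. -/
def DAN {Ω : Type*} [MeasurableSpace Ω] (μ : Measure Ω) (X : ℕ → Ω → ℝ) : Prop :=
  ∃ a : ℕ → ℝ, (∀ n, 0 < a n) ∧
    TendstoInDistr μ (fun n ω => S X n ω / a n) (gaussianReal 0 1)

open Finset

namespace IID

variable {Ω : Type*} [MeasurableSpace Ω] {μ : Measure Ω} {X : ℕ → Ω → ℝ}

lemma map_comp_eq_infinitePi (hiid : IID μ X) (hmeas : ∀ i, Measurable (X i))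
    {g : ℕ → ℕ} (hg : g.Injective) :
    μ.map (fun ω i => X (g i) ω) = Measure.infinitePi (fun _ => μ.map (X 1)) := by
  rw [(hiid.1.precomp hg).map_fun_eq_infinitePi_map₀
    (measurable_pi_lambda _ fun i => hmeas (g i)).aemeasurable]
  congr with i : 1
  exact (hiid.2 (g i)).map_eq

lemma integral_comp_injective (hiid : IID μ X) (hmeas : ∀ i, Measurable (X i))
    {g : ℕ → ℕ} (hg : g.Injective) {F : (ℕ → ℝ) → ℝ} (hF : Measurable F) :
    ∫ ω, F (fun i => X (g i) ω) ∂μ = ∫ ω, F (fun i => X i ω) ∂μ := by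
  rw [← integral_map (measurable_pi_lambda _ fun i => hmeas (g i)).aemeasurable
      hF.aestronglyMeasurable,
    ← integral_map (measurable_pi_lambda _ hmeas).aemeasurable hF.aestronglyMeasurable,
    hiid.map_comp_eq_infinitePi hmeas hg]
  exact congrArg (fun ν => ∫ x, F x ∂ν)
    (hiid.map_comp_eq_infinitePi hmeas Function.injective_id).symm

end IID

section V2

variable {Ω : Type*} (X : ℕ → Ω → ℝ)

lemma V2_comp_swap {i j m : ℕ} (hi : i ∈ Icc 1 m) (hj : j ∈ Icc 1 m) (ω : Ω) :
    V2 (fun l => X (Equiv.swap i j l)) m ω = V2 X m ω := by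
  refine Equiv.Perm.sum_comp _ _ (fun l => X l ω ^ 2) fun a ha => ?_
  rcases Equiv.swap_apply_ne_self_iff.1 ha with ⟨-, rfl | rfl⟩ <;> assumption

lemma sq_le_V2 {i m : ℕ} (hi : i ∈ Icc 1 m) (ω : Ω) : X i ω ^ 2 ≤ V2 X m ω :=
  single_le_sum (f := fun l => X l ω ^ 2) (fun _ _ => sq_nonneg _) hi

lemma norm_sq_div_V2_le_one {i m : ℕ} (hi : i ∈ Icc 1 m) (ω : Ω) :
    ‖X i ω ^ 2 / V2 X m ω‖ ≤ 1 := by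
  have hV : 0 ≤ V2 X m ω := (sq_nonneg _).trans (sq_le_V2 X hi ω)
  rw [Real.norm_of_nonneg (div_nonneg (sq_nonneg _) hV)]
  exact div_le_one_of_le₀ (sq_le_V2 X hi ω) hV

variable [MeasurableSpace Ω] {X}

lemma measurable_V2 (hmeas : ∀ i, Measurable (X i)) (m : ℕ) : Measurable (V2 X m) :=
  Finset.measurable_sum _ fun i _ => (hmeas i).pow_const 2

lemma integrable_sq_div_V2 {μ : Measure Ω} [IsFiniteMeasure μ] (hmeas : ∀ i, Measurable (X i))
    {i m : ℕ} (hi : i ∈ Icc 1 m) :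
    Integrable (fun ω => X i ω ^ 2 / V2 X m ω) μ :=
  (integrable_const (1 : ℝ)).mono'
    (((hmeas i).pow_const 2).div (measurable_V2 hmeas m)).aestronglyMeasurable
    (ae_of_all _ (norm_sq_div_V2_le_one X hi))

lemma ae_V2_pos {μ : Measure Ω} {i m : ℕ} (hi : i ∈ Icc 1 m) (hzero : μ {ω | X i ω = 0} = 0) :
    ∀ᵐ ω ∂μ, 0 < V2 X m ω := by
  filter_upwards [measure_eq_zero_iff_ae_notMem.1 hzero] with ω hω
  exact (pow_pos (abs_pos.2 hω) 2).trans_le (sq_abs (X i ω) ▸ sq_le_V2 X hi ω)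

end V2

lemma IID.natCast_mul_integral_sq_div_V2_mul {Ω : Type*} [MeasurableSpace Ω] {μ : Measure Ω}
    [IsFiniteMeasure μ] {X : ℕ → Ω → ℝ} (hmeas : ∀ i, Measurable (X i)) (hiid : IID μ X)
    {m : ℕ} (hm : 1 ≤ m) (hzero : μ {ω | X m ω = 0} = 0)
    {h : (ℕ → ℝ) → ℝ} (hh : Measurable h) (hint : Integrable (fun ω => h (fun i => X i ω)) μ)
    (hswap : ∀ i ∈ Icc 1 m, ∀ x, h (x ∘ Equiv.swap i m) = h x) :
    (m : ℝ) * ∫ ω, X m ω ^ 2 / V2 X m ω * h (fun i => X i ω) ∂μ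
      = ∫ ω, h (fun i => X i ω) ∂μ := by
  have hmm : m ∈ Icc 1 m := mem_Icc.2 ⟨hm, le_rfl⟩
  have hterm : ∀ i ∈ Icc 1 m, ∫ ω, X i ω ^ 2 / V2 X m ω * h (fun i => X i ω) ∂μ
      = ∫ ω, X m ω ^ 2 / V2 X m ω * h (fun i => X i ω) ∂μ := by
    intro i hi
    -- `V2 (fun l y => y l) m` is `V2` of the coordinate process on `ℕ → ℝ`.
    have hF : Measurable fun x : ℕ → ℝ => x m ^ 2 / V2 (fun l y => y l) m x * h x :=
      (((measurable_pi_apply m).pow_const 2).div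
        (measurable_V2 (fun l => measurable_pi_apply l) m)).mul hh
    refine (integral_congr_ae (ae_of_all _ fun ω => ?_)).trans
      (hiid.integral_comp_injective hmeas (Equiv.swap i m).injective hF)
    change _ = X (Equiv.swap i m m) ω ^ 2 / V2 (fun l => X (Equiv.swap i m l)) m ω
      * h ((fun l => X l ω) ∘ Equiv.swap i m)
    rw [Equiv.swap_apply_right, V2_comp_swap X hi hmm ω, hswap i hi]
  have hint_term : ∀ i ∈ Icc 1 m,
      Integrable (fun ω => X i ω ^ 2 / V2 X m ω * h (fun i => X i ω)) μ := fun i hi =>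
    hint.bdd_mul (((hmeas i).pow_const 2).div (measurable_V2 hmeas m)).aestronglyMeasurable
      (ae_of_all _ (norm_sq_div_V2_le_one X hi))
  calc (m : ℝ) * ∫ ω, X m ω ^ 2 / V2 X m ω * h (fun i => X i ω) ∂μ
      = ∑ i ∈ Icc 1 m, ∫ ω, X i ω ^ 2 / V2 X m ω * h (fun i => X i ω) ∂μ := by
        rw [sum_congr rfl hterm, sum_const, Nat.card_Icc, nsmul_eq_mul, Nat.add_sub_cancel]
    _ = ∫ ω, h (fun i => X i ω) ∂μ := by
        rw [← integral_finsetSum _ hint_term]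
        refine integral_congr_ae ?_
        filter_upwards [ae_V2_pos hmm hzero] with ω hω
        rw [← sum_mul, ← sum_div]
        change V2 X m ω / V2 X m ω * _ = _
        rw [div_self hω.ne', one_mul]

/-- For i.i.d. `X_i` with `P(X_i = 0) = 0`, for all `j < k`,
`E[(X_{j+1}^2/V_{j+1}^2)(X_{k+1}^2/V_{k+1}^2)] = 1/((j+1)(k+1))`. -/
theorem stmt1 {Ω : Type*} [MeasurableSpace Ω] (μ : Measure Ω) [IsProbabilityMeasure μ]
    (X : ℕ → Ω → ℝ)
    (hmeas : ∀ i, Measurable (X i))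
    (hiid : IID μ X)
    (hzero : ∀ i, μ {ω | X i ω = 0} = 0) :
    ∀ j k : ℕ, j < k →
      ∫ ω, ((X (j+1) ω)^2 / V2 X (j+1) ω) * ((X (k+1) ω)^2 / V2 X (k+1) ω) ∂μ
        = 1 / (((j : ℝ) + 1) * ((k : ℝ) + 1)) := by
  intro j k hjk
  have hk : k + 1 ∈ Icc 1 (k + 1) := mem_Icc.2 ⟨le_add_self, le_rfl⟩
  have hmean : ((k + 1 : ℕ) : ℝ) * ∫ ω, X (k + 1) ω ^ 2 / V2 X (k + 1) ω ∂μ = 1 := by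
    simpa using hiid.natCast_mul_integral_sq_div_V2_mul hmeas le_add_self (hzero _)
      (h := fun _ => 1) measurable_const (integrable_const 1) fun _ _ _ => rfl
  have hcorr : ((j + 1 : ℕ) : ℝ) * ∫ ω, X (j + 1) ω ^ 2 / V2 X (j + 1) ω
        * (X (k + 1) ω ^ 2 / V2 X (k + 1) ω) ∂μ
      = ∫ ω, X (k + 1) ω ^ 2 / V2 X (k + 1) ω ∂μ := by
    refine hiid.natCast_mul_integral_sq_div_V2_mul hmeas le_add_self (hzero _)
      (h := fun x => x (k + 1) ^ 2 / V2 (fun l y => y l) (k + 1) x)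
      (((measurable_pi_apply _).pow_const 2).div
        (measurable_V2 (fun l => measurable_pi_apply l) _))
      (integrable_sq_div_V2 hmeas hk) fun i hi x => ?_
    have hi' : i ∈ Icc 1 (k + 1) := Icc_subset_Icc_right (by omega) hi
    have hj' : j + 1 ∈ Icc 1 (k + 1) := mem_Icc.2 ⟨le_add_self, by omega⟩
    have hV : V2 (fun l y => y l) (k + 1) (x ∘ Equiv.swap i (j + 1))
        = V2 (fun l y => y l) (k + 1) x := V2_comp_swap (fun l (y : ℕ → ℝ) => y l) hi' hj' x
    have hki : k + 1 ≠ i := by have := (mem_Icc.1 hi).2; omega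
    rw [hV, Function.comp_apply, Equiv.swap_apply_of_ne_of_ne hki (by omega)]
  rw [eq_div_iff (by positivity)]
  push_cast at hmean hcorr
  linear_combination ((k : ℝ) + 1) * hcorr + hmean
end
end

section
/- Let X_1, X_2, ... be real random variables with V_j > 0 a.s., and define Y_j = S_j/V_j as above. Then for all n \le k, |Y_k - Y_n| \le \sum_{j=n}^{k-1} (X_{j+1}^2 / (V_{j+1}(V_j + V_{j+1}))) |Y_j| + |\sum_{j=n}^{k-1} X_{j+1}/V_{j+1}|, and consequently sup_{n \le k \le l+1} |Y_k - Y_n| \le \sum_{j=n}^{l} (X_{j+1}^2/(V_{j+1}(V_j + V_{j+1}))) |Y_j| + sup_{n \le k \le l} |\sum_{j=n}^{k} X_{j+1}/V_{j+1}|. -/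
open MeasureTheory ProbabilityTheory Filter

noncomputable section

/-! Writing `Y_{j+1} - Y_j = -c_j Y_j + b_j` with `c_j = X_{j+1}^2 / (V_{j+1} (V_j + V_{j+1}))`,
which is `≥ 0`, and `b_j = X_{j+1} / V_{j+1}`, which follows from `V_{j+1}^2 - V_j^2 = X_{j+1}^2`,
the increment `Y_k - Y_n` telescopes into `∑ (-c_j Y_j) + ∑ b_j`; the triangle inequality
gives the first bound, and bounding each `k ≤ l + 1` by the case `k` gives the second. -/

theorem div_add_sub_div_eq {a b s x : ℝ} (ha : 0 < a) (hb : 0 < b)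
    (hx : x ^ 2 = b ^ 2 - a ^ 2) :
    (s + x) / b - s / a = -(s / a) * (x ^ 2 / (b * (a + b))) + x / b := by
  rw [hx]
  field_simp
  ring

theorem abs_sub_le_sum_mul_abs_add_abs_sum {y c b : ℕ → ℝ} {n k : ℕ} (hnk : n ≤ k)
    (hc : ∀ j ∈ Finset.Ico n k, 0 ≤ c j)
    (hy : ∀ j ∈ Finset.Ico n k, y (j + 1) - y j = -y j * c j + b j) :
    |y k - y n| ≤ (∑ j ∈ Finset.Ico n k, c j * |y j|) + |∑ j ∈ Finset.Ico n k, b j| := by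
  have htele :
      y k - y n = (∑ j ∈ Finset.Ico n k, -y j * c j) + ∑ j ∈ Finset.Ico n k, b j := by
    rw [← Finset.sum_Ico_sub y hnk, ← Finset.sum_add_distrib]
    exact Finset.sum_congr rfl hy
  rw [htele]
  refine (abs_add_le _ _).trans (add_le_add_left ?_ _)
  refine (Finset.abs_sum_le_sum_abs _ _).trans (Finset.sum_le_sum fun j hj => ?_)
  rw [abs_mul, abs_neg, abs_of_nonneg (hc j hj), mul_comm]

theorem abs_sum_Ico_le_sup' (b : ℕ → ℝ) {n k l : ℕ} (hnl : n ≤ l) (hnk : n ≤ k)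
    (hkl : k ≤ l + 1) :
    |∑ j ∈ Finset.Ico n k, b j|
      ≤ (Finset.Icc n l).sup' (Finset.nonempty_Icc.mpr hnl)
          (fun m => |∑ j ∈ Finset.Icc n m, b j|) := by
  rcases hnk.eq_or_lt with rfl | hnk
  · rw [Finset.Ico_self, Finset.sum_empty, abs_zero]
    exact (abs_nonneg _).trans (Finset.le_sup' (fun m => |∑ j ∈ Finset.Icc n m, b j|)
      (Finset.left_mem_Icc.mpr hnl))
  · obtain ⟨m, rfl⟩ : ∃ m, k = m + 1 := ⟨k - 1, by omega⟩
    rw [Finset.Ico_add_one_right_eq_Icc]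
    exact Finset.le_sup' (fun m => |∑ j ∈ Finset.Icc n m, b j|)
      (Finset.mem_Icc.mpr ⟨by omega, by omega⟩)

theorem sup'_abs_sub_le_sum_mul_abs_add_sup' {y c b : ℕ → ℝ} {n l : ℕ} (hnl : n ≤ l)
    (hc : ∀ j ∈ Finset.Icc n l, 0 ≤ c j)
    (hy : ∀ j ∈ Finset.Icc n l, y (j + 1) - y j = -y j * c j + b j) :
    (Finset.Icc n (l + 1)).sup' (Finset.nonempty_Icc.mpr (hnl.trans l.le_succ))
        (fun k => |y k - y n|)
      ≤ (∑ j ∈ Finset.Icc n l, c j * |y j|)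
        + (Finset.Icc n l).sup' (Finset.nonempty_Icc.mpr hnl)
            (fun k => |∑ j ∈ Finset.Icc n k, b j|) := by
  refine Finset.sup'_le _ _ fun k hk => ?_
  obtain ⟨hnk, hkl⟩ := Finset.mem_Icc.mp hk
  have hsub : Finset.Ico n k ⊆ Finset.Icc n l := fun j hj => by
    simp only [Finset.mem_Ico, Finset.mem_Icc] at hj ⊢
    omega
  refine (abs_sub_le_sum_mul_abs_add_abs_sum hnk (fun j hj => hc j (hsub hj))
    (fun j hj => hy j (hsub hj))).trans (add_le_add ?_ (abs_sum_Ico_le_sup' b hnl hnk hkl))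
  exact Finset.sum_le_sum_of_subset_of_nonneg hsub fun j hj _ =>
    mul_nonneg (hc j hj) (abs_nonneg _)

section SelfNormalized

variable {Ω : Type*} (X : ℕ → Ω → ℝ) (ω : Ω)

theorem V_nonneg (j : ℕ) : 0 ≤ V X j ω := Real.sqrt_nonneg _

theorem S_succ (j : ℕ) : S X (j + 1) ω = S X j ω + X (j + 1) ω := by
  rw [S, S, Finset.sum_Icc_succ_top (by omega)]

theorem V_succ_sq (j : ℕ) : V X (j + 1) ω ^ 2 = V X j ω ^ 2 + X (j + 1) ω ^ 2 := by
  have hV2 : ∀ m, 0 ≤ V2 X m ω := fun m => Finset.sum_nonneg fun i _ => sq_nonneg _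
  rw [V, V, Real.sq_sqrt (hV2 _), Real.sq_sqrt (hV2 _), V2, V2,
    Finset.sum_Icc_succ_top (by omega)]

theorem Ysn_succ_sub {j : ℕ} (hj : 0 < V X j ω) (hj' : 0 < V X (j + 1) ω) :
    Ysn X (j + 1) ω - Ysn X j ω
      = -Ysn X j ω * (X (j + 1) ω ^ 2 / (V X (j + 1) ω * (V X j ω + V X (j + 1) ω)))
        + X (j + 1) ω / V X (j + 1) ω := by
  rw [Ysn, Ysn, S_succ]
  exact div_add_sub_div_eq hj hj' (by rw [V_succ_sq]; ring)

end SelfNormalized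

/-- Telescoping bound for increments of self-normalized sums, and the resulting bound
on the running supremum. -/
theorem stmt4 {Ω : Type*} [MeasurableSpace Ω] (μ : Measure Ω)
    (X : ℕ → Ω → ℝ)
    (hV : ∀ j, 1 ≤ j → ∀ᵐ ω ∂μ, 0 < V X j ω) :
    ∀ᵐ ω ∂μ,
      (∀ n k : ℕ, 1 ≤ n → n ≤ k →
        |Ysn X k ω - Ysn X n ω|
          ≤ (∑ j ∈ Finset.Ico n k,
              (X (j+1) ω)^2 / (V X (j+1) ω * (V X j ω + V X (j+1) ω)) * |Ysn X j ω|)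
            + |∑ j ∈ Finset.Ico n k, X (j+1) ω / V X (j+1) ω|)
      ∧ ∀ (n l : ℕ) (hn : 1 ≤ n) (hnl : n ≤ l),
        (Finset.Icc n (l+1)).sup' (Finset.nonempty_Icc.mpr (by omega))
            (fun k => |Ysn X k ω - Ysn X n ω|)
          ≤ (∑ j ∈ Finset.Icc n l,
              (X (j+1) ω)^2 / (V X (j+1) ω * (V X j ω + V X (j+1) ω)) * |Ysn X j ω|)
            + (Finset.Icc n l).sup' (Finset.nonempty_Icc.mpr hnl)
                (fun k => |∑ j ∈ Finset.Icc n k, X (j+1) ω / V X (j+1) ω|) := by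
  have hV_all : ∀ᵐ ω ∂μ, ∀ j, 1 ≤ j → 0 < V X j ω := ae_all_iff.2 fun j =>
    if hj : 1 ≤ j then (hV j hj).mono fun _ h _ => h else .of_forall fun _ h => absurd h hj
  filter_upwards [hV_all] with ω hv
  have hc : ∀ j, 0 ≤ X (j + 1) ω ^ 2 / (V X (j + 1) ω * (V X j ω + V X (j + 1) ω)) :=
    fun j => div_nonneg (sq_nonneg _)
      (mul_nonneg (V_nonneg X ω _) (add_nonneg (V_nonneg X ω _) (V_nonneg X ω _)))
  have hstep : ∀ j, 1 ≤ j → Ysn X (j + 1) ω - Ysn X j ω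
      = -Ysn X j ω * (X (j + 1) ω ^ 2 / (V X (j + 1) ω * (V X j ω + V X (j + 1) ω)))
        + X (j + 1) ω / V X (j + 1) ω := fun j hj =>
    Ysn_succ_sub X ω (hv j hj) (hv (j + 1) (by omega))
  refine ⟨fun n k hn hnk => ?_, fun n l hn hnl => ?_⟩
  · exact abs_sub_le_sum_mul_abs_add_abs_sum (y := (Ysn X · ω)) hnk (fun j _ => hc j)
      fun j hj => hstep j (hn.trans (Finset.mem_Ico.mp hj).1)
  · exact sup'_abs_sub_le_sum_mul_abs_add_sup' (y := (Ysn X · ω)) hnl (fun j _ => hc j)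
      fun j hj => hstep j (hn.trans (Finset.mem_Icc.mp hj).1)
end
end

section
/- Let X_1, X_2, ... be i.i.d. symmetric real random variables with P(X_i=0)=0, V_m^2 = \sum_{i=1}^m X_i^2, Y_j = S_j/V_j. Then for j < k: E[(X_{j+1}^2/V_{j+1}^2)(X_{k+1}^2/V_{k+1}^2) |Y_j| |Y_k|] \le E[(X_{j+1}^2/V_{j+1}^2)(X_{k+1}^2/V_{k+1}^2)] = 1/((j+1)(k+1)). -/
open MeasureTheory ProbabilityTheory Filter

noncomputable section

/-!
Everything is transported to the canonical space `ℕ → ℝ` with the product law `ν^ℕ`, `ν` the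
common law of the `X i`. There, flipping the sign of one coordinate preserves the law, so for a
sign-invariant weight `W ≥ 0` the cross terms of `(∑_{i ∈ A} x i)² / V_A²` integrate to zero
against `W`, and `E[W Y_A²] ≤ E[W]`; the inequality follows from `2 |Y_A| |Y_B| ≤ Y_A² + Y_B²`.
Swapping two coordinates also preserves the law, so the shares `x a² / V_A²`, `a ∈ A`, have the
same integral against a weight that is invariant under these swaps; as they sum to `1` almost
surely (`ν` has no atom at `0`), each contributes `1 / #A`, which gives the value
`1 / ((j + 1) (k + 1))`.
-/

namespace SelfNormalized

open Finset Measure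

variable {ι : Type*}

def sumSq (A : Finset ι) (x : ι → ℝ) : ℝ := ∑ i ∈ A, x i ^ 2

def sqShare (A : Finset ι) (i : ι) (x : ι → ℝ) : ℝ := x i ^ 2 / sumSq A x

def selfNormSum (A : Finset ι) (x : ι → ℝ) : ℝ := (∑ i ∈ A, x i) / √(sumSq A x)

def signFlip [DecidableEq ι] (a : ι) (x : ι → ℝ) : ι → ℝ := Function.update x a (-x a)

section Pointwise

variable {A : Finset ι} {a b : ι} (x : ι → ℝ)

lemma sumSq_nonneg : 0 ≤ sumSq A x := sum_nonneg fun _ _ ↦ sq_nonneg _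

lemma sq_le_sumSq (ha : a ∈ A) : x a ^ 2 ≤ sumSq A x :=
  single_le_sum (fun i _ ↦ sq_nonneg (x i)) ha

lemma sqShare_nonneg : 0 ≤ sqShare A a x := div_nonneg (sq_nonneg _) (sumSq_nonneg x)

lemma sqShare_le_one (ha : a ∈ A) : sqShare A a x ≤ 1 :=
  div_le_one_of_le₀ (sq_le_sumSq x ha) (sumSq_nonneg x)

lemma sum_sqShare : ∑ i ∈ A, sqShare A i x = sumSq A x / sumSq A x := by
  simp only [sqShare, ← sum_div, sumSq]

lemma abs_mul_div_sumSq_le_one (ha : a ∈ A) (hb : b ∈ A) : |x a * x b / sumSq A x| ≤ 1 := by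
  have habs : ∀ {i}, i ∈ A → |x i| ≤ √(sumSq A x) := fun hi ↦
    Real.abs_le_sqrt (sq_le_sumSq x hi)
  rw [abs_div, abs_of_nonneg (sumSq_nonneg x), abs_mul]
  refine div_le_one_of_le₀ ?_ (sumSq_nonneg x)
  calc |x a| * |x b| ≤ √(sumSq A x) * √(sumSq A x) :=
        mul_le_mul (habs ha) (habs hb) (abs_nonneg _) (Real.sqrt_nonneg _)
    _ = sumSq A x := Real.mul_self_sqrt (sumSq_nonneg x)

lemma selfNormSum_sq : selfNormSum A x ^ 2 = ∑ a ∈ A, ∑ b ∈ A, x a * x b / sumSq A x := by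
  rw [selfNormSum, div_pow, Real.sq_sqrt (sumSq_nonneg x), sq, sum_mul_sum, sum_div]
  simp_rw [sum_div]

lemma selfNormSum_sq_le_card : selfNormSum A x ^ 2 ≤ #A := by
  rw [selfNormSum, div_pow, Real.sq_sqrt (sumSq_nonneg x)]
  exact div_le_of_le_mul₀ (sumSq_nonneg x) (Nat.cast_nonneg _) sq_sum_le_card_mul_sum_sq

lemma sumSq_comp_swap [DecidableEq ι] (ha : a ∈ A) (hb : b ∈ A) :
    sumSq A (x ∘ Equiv.swap a b) = sumSq A x := by
  refine Equiv.Perm.sum_comp (Equiv.swap a b) A (fun i ↦ x i ^ 2) fun i hi ↦ ?_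
  rcases Equiv.swap_apply_ne_self_iff.mp hi with ⟨-, rfl | rfl⟩ <;> assumption

variable [DecidableEq ι]

lemma signFlip_apply_self : signFlip a x a = -x a := Function.update_self ..

lemma signFlip_apply_of_ne (h : b ≠ a) : signFlip a x b = x b := Function.update_of_ne h ..

lemma sq_signFlip_apply (i : ι) : signFlip a x i ^ 2 = x i ^ 2 := by
  by_cases h : i = a
  · rw [h, signFlip_apply_self, neg_sq]
  · rw [signFlip_apply_of_ne x h]

lemma sumSq_signFlip : sumSq A (signFlip a x) = sumSq A x :=
  sum_congr rfl fun i _ ↦ sq_signFlip_apply x i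

lemma sqShare_signFlip : sqShare A b (signFlip a x) = sqShare A b x := by
  rw [sqShare, sqShare, sq_signFlip_apply, sumSq_signFlip]

lemma signFlip_involutive : Function.Involutive (signFlip (ι := ι) a) := fun x ↦ by
  simp [signFlip]

end Pointwise

section ProductMeasure

variable {ν : Measure ℝ} [IsProbabilityMeasure ν]

lemma measurable_sumSq (A : Finset ι) : Measurable (sumSq A) := by
  unfold sumSq; fun_prop

lemma measurable_sqShare (A : Finset ι) (i : ι) : Measurable (sqShare A i) :=
  ((measurable_pi_apply i).pow_const 2).div (measurable_sumSq A)

lemma measurable_selfNormSum (A : Finset ι) : Measurable (selfNormSum A) :=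
  (Finset.measurable_sum A fun i _ ↦ measurable_pi_apply i).div (measurable_sumSq A).sqrt

lemma measurable_signFlip [DecidableEq ι] (a : ι) : Measurable (signFlip (ι := ι) a) := by
  unfold signFlip; fun_prop

lemma integrable_sqShare {A : Finset ι} {i : ι} (hi : i ∈ A) :
    Integrable (sqShare A i) (infinitePi fun _ : ι ↦ ν) :=
  .of_bound (measurable_sqShare A i).aestronglyMeasurable 1 <| ae_of_all _ fun x ↦ by
    rw [Real.norm_of_nonneg (sqShare_nonneg x)]
    exact sqShare_le_one x hi

lemma measurePreserving_signFlip [DecidableEq ι] (hν : ν.map Neg.neg = ν) (a : ι) :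
    MeasurePreserving (signFlip a) (infinitePi fun _ : ι ↦ ν) (infinitePi fun _ : ι ↦ ν) := by
  have hmap : ∀ i, Measurable (if i = a then Neg.neg else id : ℝ → ℝ) := fun i ↦ by
    split_ifs <;> fun_prop
  have hflip : signFlip a = fun x i ↦ (if i = a then Neg.neg else id : ℝ → ℝ) (x i) := by
    ext x i
    by_cases h : i = a
    · simp [h, signFlip_apply_self]
    · simp [h, signFlip_apply_of_ne x h]
  refine ⟨measurable_signFlip a, ?_⟩
  rw [hflip]
  refine (infinitePi_map_pi _ hmap).trans ?_
  congr with i : 1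
  split_ifs
  exacts [hν, map_id]

lemma integral_eq_zero_of_signFlip [DecidableEq ι] (hν : ν.map Neg.neg = ν) (a : ι)
    {f : (ι → ℝ) → ℝ} (hf : ∀ x, f (signFlip a x) = -f x) :
    ∫ x, f x ∂(infinitePi fun _ : ι ↦ ν) = 0 := by
  have h := (measurePreserving_signFlip hν a).integral_comp (MeasurableEquiv.ofInvolutive _
    signFlip_involutive (measurable_signFlip a)).measurableEmbedding f
  simp only [hf, integral_neg] at h
  linarith

lemma integral_comp_perm [DecidableEq ι] (σ : Equiv.Perm ι) (f : (ι → ℝ) → ℝ) :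
    ∫ x, f (x ∘ σ) ∂(infinitePi fun _ : ι ↦ ν) = ∫ x, f x ∂(infinitePi fun _ : ι ↦ ν) := by
  let e := MeasurableEquiv.piCongrLeft (fun _ : ι ↦ ℝ) σ.symm
  have he : MeasurePreserving e (infinitePi fun _ : ι ↦ ν) (infinitePi fun _ : ι ↦ ν) :=
    ⟨e.measurable, infinitePi_map_piCongrLeft (fun _ : ι ↦ ν) σ.symm⟩
  rw [← he.integral_comp' f]
  refine integral_congr_ae (ae_of_all _ fun x ↦ congrArg f (funext fun i ↦ ?_))
  have h := MeasurableEquiv.piCongrLeft_apply_apply (β := fun _ : ι ↦ ℝ) σ.symm x (σ i)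
  rw [Equiv.symm_apply_apply] at h
  exact h.symm

lemma ae_sumSq_pos (hν0 : ν {0} = 0) {A : Finset ι} {a : ι} (ha : a ∈ A) :
    ∀ᵐ x ∂(infinitePi fun _ : ι ↦ ν), 0 < sumSq A x := by
  have hne : ∀ᵐ x ∂(infinitePi fun _ : ι ↦ ν), x a ≠ 0 := by
    simp only [ae_iff, ne_eq, not_not]
    exact ((measurePreserving_eval_infinitePi (fun _ : ι ↦ ν) a).measure_preimage
      (measurableSet_singleton (0 : ℝ)).nullMeasurableSet).trans hν0
  filter_upwards [hne] with x hx
  exact (sq_pos_of_ne_zero hx).trans_le (sq_le_sumSq x ha)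

lemma card_mul_integral_sqShare_mul [DecidableEq ι] (hν0 : ν {0} = 0) {A : Finset ι} {J : ι}
    (hJ : J ∈ A) {G : (ι → ℝ) → ℝ} (hG : Integrable G (infinitePi fun _ : ι ↦ ν))
    (hGswap : ∀ a ∈ A, ∀ x, G (x ∘ Equiv.swap J a) = G x) :
    #A * ∫ x, sqShare A J x * G x ∂(infinitePi fun _ : ι ↦ ν)
      = ∫ x, G x ∂(infinitePi fun _ : ι ↦ ν) := by
  have hint : ∀ a ∈ A, Integrable (fun x ↦ sqShare A a x * G x) (infinitePi fun _ : ι ↦ ν) :=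
    fun a ha ↦ hG.bdd_mul (measurable_sqShare A a).aestronglyMeasurable <| ae_of_all _ fun x ↦ by
      rw [Real.norm_of_nonneg (sqShare_nonneg x)]
      exact sqShare_le_one x ha
  have hswap : ∀ a ∈ A, ∫ x, sqShare A a x * G x ∂(infinitePi fun _ : ι ↦ ν)
      = ∫ x, sqShare A J x * G x ∂(infinitePi fun _ : ι ↦ ν) := fun a ha ↦ by
    rw [← integral_comp_perm (Equiv.swap J a)]
    refine integral_congr_ae (ae_of_all _ fun x ↦ ?_)
    simp only [sqShare, Function.comp_apply, Equiv.swap_apply_right, sumSq_comp_swap x hJ ha,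
      hGswap a ha]
  calc #A * ∫ x, sqShare A J x * G x ∂(infinitePi fun _ : ι ↦ ν)
      = ∑ a ∈ A, ∫ x, sqShare A a x * G x ∂(infinitePi fun _ : ι ↦ ν) := by
        rw [sum_congr rfl hswap, sum_const, nsmul_eq_mul]
    _ = ∫ x, (∑ a ∈ A, sqShare A a x) * G x ∂(infinitePi fun _ : ι ↦ ν) := by
        simp only [sum_mul]
        exact (integral_finsetSum A hint).symm
    _ = ∫ x, G x ∂(infinitePi fun _ : ι ↦ ν) := by
        refine integral_congr_ae ?_
        filter_upwards [ae_sumSq_pos hν0 hJ] with x hx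
        rw [sum_sqShare, div_self hx.ne', one_mul]

lemma integral_sqShare_mul_sqShare [DecidableEq ι] (hν0 : ν {0} = 0) {A B : Finset ι}
    (hAB : A ⊆ B) {J K : ι} (hJ : J ∈ A) (hK : K ∈ B) (hKA : K ∉ A) :
    ∫ x, sqShare A J x * sqShare B K x ∂(infinitePi fun _ : ι ↦ ν) = 1 / (#A * #B) := by
  have hB : #B * ∫ x, sqShare B K x ∂(infinitePi fun _ : ι ↦ ν) = 1 := by
    simpa using card_mul_integral_sqShare_mul hν0 hK (integrable_const (1 : ℝ))
      fun _ _ _ ↦ rfl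
  have hA : #A * ∫ x, sqShare A J x * sqShare B K x ∂(infinitePi fun _ : ι ↦ ν)
      = ∫ x, sqShare B K x ∂(infinitePi fun _ : ι ↦ ν) := by
    refine card_mul_integral_sqShare_mul hν0 hJ (integrable_sqShare hK) fun a ha x ↦ ?_
    have hKfix : Equiv.swap J a K = K := Equiv.swap_apply_of_ne_of_ne
      (ne_of_mem_of_not_mem hJ hKA).symm (ne_of_mem_of_not_mem ha hKA).symm
    simp only [sqShare, Function.comp_apply, hKfix, sumSq_comp_swap x (hAB hJ) (hAB ha)]
  have hApos : (0 : ℝ) < #A := by exact_mod_cast card_pos.2 ⟨J, hJ⟩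
  have hBpos : (0 : ℝ) < #B := by exact_mod_cast card_pos.2 ⟨K, hK⟩
  rw [eq_div_iff (by positivity), ← hB, ← hA]
  ring

lemma integral_mul_div_sumSq_mul_eq_zero [DecidableEq ι] (hν : ν.map Neg.neg = ν)
    {W : (ι → ℝ) → ℝ} (hWflip : ∀ a x, W (signFlip a x) = W x) (A : Finset ι) {a b : ι}
    (hab : a ≠ b) : ∫ x, x a * x b / sumSq A x * W x ∂(infinitePi fun _ : ι ↦ ν) = 0 :=
  integral_eq_zero_of_signFlip hν b fun x ↦ by
    rw [hWflip, sumSq_signFlip, signFlip_apply_self, signFlip_apply_of_ne x hab]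
    ring

lemma integral_selfNormSum_sq_mul_le [DecidableEq ι] (hν : ν.map Neg.neg = ν)
    {W : (ι → ℝ) → ℝ} (hW : Integrable W (infinitePi fun _ : ι ↦ ν)) (hW0 : ∀ x, 0 ≤ W x)
    (hWflip : ∀ a x, W (signFlip a x) = W x) (A : Finset ι) :
    ∫ x, selfNormSum A x ^ 2 * W x ∂(infinitePi fun _ : ι ↦ ν)
      ≤ ∫ x, W x ∂(infinitePi fun _ : ι ↦ ν) := by
  have hint : ∀ a ∈ A, ∀ b ∈ A,
      Integrable (fun x ↦ x a * x b / sumSq A x * W x) (infinitePi fun _ : ι ↦ ν) :=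
    fun a ha b hb ↦ hW.bdd_mul
      (((measurable_pi_apply a).mul (measurable_pi_apply b)).div
        (measurable_sumSq A)).aestronglyMeasurable
      (ae_of_all _ fun x ↦ abs_mul_div_sumSq_le_one x ha hb)
  calc ∫ x, selfNormSum A x ^ 2 * W x ∂(infinitePi fun _ : ι ↦ ν)
      = ∑ a ∈ A, ∑ b ∈ A, ∫ x, x a * x b / sumSq A x * W x ∂(infinitePi fun _ : ι ↦ ν) := by
        simp only [selfNormSum_sq, sum_mul]
        rw [integral_finsetSum A fun a ha ↦ integrable_finsetSum A (hint a ha)]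
        exact sum_congr rfl fun a ha ↦ integral_finsetSum A (hint a ha)
    _ = ∑ a ∈ A, ∫ x, x a * x a / sumSq A x * W x ∂(infinitePi fun _ : ι ↦ ν) :=
        sum_congr rfl fun a ha ↦ sum_eq_single_of_mem a ha fun b _ hba ↦
          integral_mul_div_sumSq_mul_eq_zero hν hWflip A hba.symm
    _ = ∫ x, (∑ a ∈ A, sqShare A a x) * W x ∂(infinitePi fun _ : ι ↦ ν) := by
        simp only [sum_mul, sqShare, sq]
        exact (integral_finsetSum A fun a ha ↦ hint a ha a ha).symm
    _ ≤ ∫ x, W x ∂(infinitePi fun _ : ι ↦ ν) := by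
        refine integral_mono_of_nonneg (ae_of_all _ fun x ↦ ?_) hW (ae_of_all _ fun x ↦ ?_)
        · exact mul_nonneg (sum_nonneg fun a _ ↦ sqShare_nonneg x) (hW0 x)
        · dsimp only
          rw [sum_sqShare]
          exact mul_le_of_le_one_left (hW0 x) (div_self_le_one _)

theorem integral_mul_abs_selfNormSum_mul_abs_le [DecidableEq ι] (hν : ν.map Neg.neg = ν)
    {W : (ι → ℝ) → ℝ} (hW : Integrable W (infinitePi fun _ : ι ↦ ν)) (hW0 : ∀ x, 0 ≤ W x)
    (hWflip : ∀ a x, W (signFlip a x) = W x) (A B : Finset ι) :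
    ∫ x, W x * |selfNormSum A x| * |selfNormSum B x| ∂(infinitePi fun _ : ι ↦ ν)
      ≤ ∫ x, W x ∂(infinitePi fun _ : ι ↦ ν) := by
  have hint : ∀ C : Finset ι,
      Integrable (fun x ↦ selfNormSum C x ^ 2 * W x) (infinitePi fun _ : ι ↦ ν) := fun C ↦
    hW.bdd_mul ((measurable_selfNormSum C).pow_const 2).aestronglyMeasurable <|
      ae_of_all _ fun x ↦ by
        rw [Real.norm_of_nonneg (sq_nonneg _)]
        exact selfNormSum_sq_le_card x
  calc ∫ x, W x * |selfNormSum A x| * |selfNormSum B x| ∂(infinitePi fun _ : ι ↦ ν)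
      ≤ ∫ x, (selfNormSum A x ^ 2 * W x + selfNormSum B x ^ 2 * W x) / 2
          ∂(infinitePi fun _ : ι ↦ ν) := by
        refine integral_mono_of_nonneg (ae_of_all _ fun x ↦ ?_)
          (((hint A).add (hint B)).div_const 2) (ae_of_all _ fun x ↦ ?_)
        · have := hW0 x
          positivity
        · have h := mul_le_mul_of_nonneg_right
            (two_mul_le_add_sq |selfNormSum A x| |selfNormSum B x|) (hW0 x)
          rw [sq_abs, sq_abs] at h
          linarith
    _ = (∫ x, selfNormSum A x ^ 2 * W x ∂(infinitePi fun _ : ι ↦ ν)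
          + ∫ x, selfNormSum B x ^ 2 * W x ∂(infinitePi fun _ : ι ↦ ν)) / 2 := by
        rw [integral_div, integral_add (hint A) (hint B)]
    _ ≤ ∫ x, W x ∂(infinitePi fun _ : ι ↦ ν) := by
        linarith [integral_selfNormSum_sq_mul_le hν hW hW0 hWflip A,
          integral_selfNormSum_sq_mul_le hν hW hW0 hWflip B]

theorem integral_sqShare_mul_sqShare_mul_abs_le [DecidableEq ι] (hν : ν.map Neg.neg = ν)
    {A B : Finset ι} {J K : ι} (hJ : J ∈ A) (hK : K ∈ B) (C D : Finset ι) :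
    ∫ x, sqShare A J x * sqShare B K x * |selfNormSum C x| * |selfNormSum D x|
        ∂(infinitePi fun _ : ι ↦ ν)
      ≤ ∫ x, sqShare A J x * sqShare B K x ∂(infinitePi fun _ : ι ↦ ν) := by
  refine integral_mul_abs_selfNormSum_mul_abs_le hν ?_
    (fun x ↦ mul_nonneg (sqShare_nonneg x) (sqShare_nonneg x))
    (fun a x ↦ by simp only [sqShare_signFlip]) C D
  exact (integrable_sqShare hK).bdd_mul (measurable_sqShare A J).aestronglyMeasurable <|
    ae_of_all _ fun x ↦ by
      rw [Real.norm_of_nonneg (sqShare_nonneg x)]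
      exact sqShare_le_one x hJ

end ProductMeasure

end SelfNormalized

open SelfNormalized Finset

/-- For i.i.d. symmetric `X_i` with `P(X_i = 0) = 0` and `j < k`,
`E[(X_{j+1}^2/V_{j+1}^2)(X_{k+1}^2/V_{k+1}^2)|Y_j||Y_k|]
  ≤ E[(X_{j+1}^2/V_{j+1}^2)(X_{k+1}^2/V_{k+1}^2)] = 1/((j+1)(k+1))`. -/
theorem stmt7 {Ω : Type*} [MeasurableSpace Ω] (μ : Measure Ω) [IsProbabilityMeasure μ]
    (X : ℕ → Ω → ℝ)
    (hmeas : ∀ i, Measurable (X i))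
    (hiid : IID μ X)
    (hsymm : SymmLaw μ X)
    (hzero : ∀ i, μ {ω | X i ω = 0} = 0) :
    ∀ j k : ℕ, j < k →
      (∫ ω, ((X (j+1) ω)^2 / V2 X (j+1) ω) * ((X (k+1) ω)^2 / V2 X (k+1) ω)
          * |Ysn X j ω| * |Ysn X k ω| ∂μ
        ≤ ∫ ω, ((X (j+1) ω)^2 / V2 X (j+1) ω) * ((X (k+1) ω)^2 / V2 X (k+1) ω) ∂μ)
      ∧ ∫ ω, ((X (j+1) ω)^2 / V2 X (j+1) ω) * ((X (k+1) ω)^2 / V2 X (k+1) ω) ∂μ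
          = 1 / (((j : ℝ) + 1) * ((k : ℝ) + 1)) := by
  intro j k hjk
  set ν := μ.map (X 1)
  have : IsProbabilityMeasure ν := Measure.isProbabilityMeasure_map (hmeas 1).aemeasurable
  have hν : ν.map Neg.neg = ν := by
    rw [Measure.map_map measurable_neg (hmeas 1)]
    exact (hsymm 1).symm
  have hν0 : ν {0} = 0 := by
    rw [Measure.map_apply (hmeas 1) (measurableSet_singleton 0)]
    exact hzero 1
  have hlaw : HasLaw (fun ω i ↦ X i ω) (Measure.infinitePi fun _ : ℕ ↦ ν) μ :=
    hiid.1.hasLaw_infinitePi (fun i ↦ ⟨(hmeas i).aemeasurable, (hiid.2 i).map_eq⟩) (by fun_prop)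
  have hJ : j + 1 ∈ Icc 1 (j + 1) := by simp
  have hK : k + 1 ∈ Icc 1 (k + 1) := by simp
  have hW := (measurable_sqShare (Icc 1 (j + 1)) (j + 1)).mul
    (measurable_sqShare (Icc 1 (k + 1)) (k + 1))
  -- the integrands of the statement are, definitionally, those of the canonical process
  -- evaluated at `fun i ↦ X i ω`
  refine ⟨?_, ?_⟩
  · exact (hlaw.integral_comp ((hW.mul (measurable_selfNormSum (Icc 1 j)).abs).mul
      (measurable_selfNormSum (Icc 1 k)).abs).aestronglyMeasurable).trans_le
      ((integral_sqShare_mul_sqShare_mul_abs_le hν hJ hK _ _).trans_eq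
        (hlaw.integral_comp hW.aestronglyMeasurable).symm)
  · refine (hlaw.integral_comp hW.aestronglyMeasurable).trans
      ((integral_sqShare_mul_sqShare hν0 (Icc_subset_Icc_right (by omega)) hJ hK
        (by simp only [mem_Icc]; omega)).trans ?_)
    simp
end
end
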